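/- arXiv:2402.07475 — 3 statements merged into one kernel-verified Lean document; each statement's English description precedes it below -/
import Mathlib

section
/- Let m : {0,1,2} → ℝ₊ with m(0) ≥ m(1) and m(0) ≥ m(2). Define F(m) = (7/4)(1/m(1) + 1/m(2)) + √((1/m(0) − 1/m(1) − 1/m(2))² + (25/16)(1/m(1) − 1/m(2))²). Then F(m) ≤ 4(1/m(1) + 1/m(2)). -/
theorem F_bound_C3 (m : Fin 3 → ℝ) (hm : ∀ i, 0 < m i)
    (h1 : m 1 ≤ m 0) (h2 : m 2 ≤ m 0) :
    (7 / 4) * (1 / m 1 + 1 / m 2) +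
      Real.sqrt ((1 / m 0 - 1 / m 1 - 1 / m 2) ^ 2 + (25 / 16) * (1 / m 1 - 1 / m 2) ^ 2) ≤
    4 * (1 / m 1 + 1 / m 2) := by
  have h0 := hm 0
  have ha : (0:ℝ) < 1 / m 1 := one_div_pos.mpr (hm 1)
  have hb : (0:ℝ) < 1 / m 2 := one_div_pos.mpr (hm 2)
  have hc : (0:ℝ) < 1 / m 0 := by positivity
  have hca : 1 / m 0 ≤ 1 / m 1 := one_div_le_one_div_of_le (hm 1) h1
  have hcb : 1 / m 0 ≤ 1 / m 2 := one_div_le_one_div_of_le (hm 2) h2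
  have hs : Real.sqrt ((1 / m 0 - 1 / m 1 - 1 / m 2) ^ 2 + (25 / 16) * (1 / m 1 - 1 / m 2) ^ 2)
      ≤ 9 / 4 * (1 / m 1 + 1 / m 2) := by
    rw [show 9 / 4 * (1 / m 1 + 1 / m 2) =
        Real.sqrt ((9 / 4 * (1 / m 1 + 1 / m 2)) ^ 2) from
        (Real.sqrt_sq (by positivity)).symm]
    apply Real.sqrt_le_sqrt
    nlinarith [sq_nonneg (1 / m 1 - 1 / m 2), mul_pos ha hb, mul_pos hc (add_pos ha hb)]
  linarith
end

section
/- Let m : {0,1,2} → ℝ₊ with m(0) ≥ m(1) and m(0) ≥ m(2). Define Ric_m(0) = (7/4)(1/m(1) + 1/m(2)) − √((1/m(0) − 1/m(1) − 1/m(2))² + (25/16)(1/m(1) − 1/m(2))²). Then Ric_m(0) ≥ 1/(2 m(0)). -/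
theorem ric_lower_bound_C3 (m : Fin 3 → ℝ) (hm : ∀ i, 0 < m i)
    (h1 : m 1 ≤ m 0) (h2 : m 2 ≤ m 0) :
    (7 / 4) * (1 / m 1 + 1 / m 2) -
      Real.sqrt ((1 / m 0 - 1 / m 1 - 1 / m 2) ^ 2 + (25 / 16) * (1 / m 1 - 1 / m 2) ^ 2) ≥
    1 / (2 * m 0) := by
  have h0 := hm 0
  have hb := hm 1
  have hc := hm 2
  set a := 1 / m 0 with ha
  set b := 1 / m 1 with hbb
  set c := 1 / m 2 with hcc
  have hab : a ≤ b := one_div_le_one_div_of_le hb h1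
  have hac : a ≤ c := one_div_le_one_div_of_le hc h2
  have hapos : 0 < a := by positivity
  have hR : (0:ℝ) ≤ 7 / 4 * (b + c) - a / 2 := by nlinarith
  have key : (a - b - c) ^ 2 + 25 / 16 * (b - c) ^ 2 ≤ (7 / 4 * (b + c) - a / 2) ^ 2 := by
    nlinarith [mul_le_mul hab hac hapos.le (le_trans hapos.le hab), sq_nonneg (b - c),
      mul_self_nonneg a, sq_nonneg (b - a), sq_nonneg (c - a)]
  have hs : Real.sqrt ((a - b - c) ^ 2 + 25 / 16 * (b - c) ^ 2) ≤ 7 / 4 * (b + c) - a / 2 := by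
    calc Real.sqrt ((a - b - c) ^ 2 + 25 / 16 * (b - c) ^ 2)
        ≤ Real.sqrt ((7 / 4 * (b + c) - a / 2) ^ 2) := Real.sqrt_le_sqrt key
      _ = 7 / 4 * (b + c) - a / 2 := Real.sqrt_sq hR
  have : 1 / (2 * m 0) = a / 2 := by rw [ha]; ring
  rw [this]
  linarith
end

section
/- For any positive function m : ℤ/kℤ → ℝ₊ on the cycle of length k, the sum over all vertices i of Ric_m(i) := (1/2)(1/m(i−1) + 1/m(i+1)) − (1/2)√((1/m(i−1) − 1/m(i+1))² + 4/m(i)²) is nonpositive. -/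
theorem sum_ric_nonpos (k : ℕ) [NeZero k] (hk : 5 ≤ k) (m : ZMod k → ℝ)
    (hm : ∀ i, 0 < m i) :
    ∑ i : ZMod k,
      ((1 / 2) * (1 / m (i - 1) + 1 / m (i + 1)) -
        (1 / 2) * Real.sqrt ((1 / m (i - 1) - 1 / m (i + 1)) ^ 2 + 4 / m i ^ 2)) ≤ 0 := by
  have key : ∀ i : ZMod k,
      (1 / 2) * (1 / m (i - 1) + 1 / m (i + 1)) -
        (1 / 2) * Real.sqrt ((1 / m (i - 1) - 1 / m (i + 1)) ^ 2 + 4 / m i ^ 2)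
      ≤ (1 / 2) * (1 / m (i - 1) + 1 / m (i + 1)) - 1 / m i := by
    intro i
    have h1 : (2 / m i) ≤ Real.sqrt ((1 / m (i - 1) - 1 / m (i + 1)) ^ 2 + 4 / m i ^ 2) := by
      have h2 : (2 / m i) ^ 2 ≤ (1 / m (i - 1) - 1 / m (i + 1)) ^ 2 + 4 / m i ^ 2 := by
        have : (2 / m i) ^ 2 = 4 / m i ^ 2 := by ring
        nlinarith [sq_nonneg (1 / m (i - 1) - 1 / m (i + 1))]
      have h3 : 0 ≤ 2 / m i := div_nonneg (by norm_num) (hm i).le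
      calc (2 / m i) = Real.sqrt ((2 / m i) ^ 2) := (Real.sqrt_sq h3).symm
        _ ≤ _ := Real.sqrt_le_sqrt h2
    have h4 : 1 / m i = (1 / 2) * (2 / m i) := by ring
    rw [h4]; nlinarith [h1]
  have hsum := Finset.sum_le_sum (fun i (_ : i ∈ Finset.univ) => key i)
  refine hsum.trans ?_
  have e1 : ∑ i : ZMod k, 1 / m (i - 1) = ∑ i : ZMod k, 1 / m i :=
    Fintype.sum_equiv (Equiv.subRight (1 : ZMod k)) _ _ (fun i => rfl)
  have e2 : ∑ i : ZMod k, 1 / m (i + 1) = ∑ i : ZMod k, 1 / m i :=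
    Fintype.sum_equiv (Equiv.addRight (1 : ZMod k)) _ _ (fun i => rfl)
  have : ∑ i : ZMod k, ((1 / 2) * (1 / m (i - 1) + 1 / m (i + 1)) - 1 / m i) = 0 := by
    simp only [mul_add]
    rw [Finset.sum_sub_distrib, Finset.sum_add_distrib, ← Finset.mul_sum, ← Finset.mul_sum,
      e1, e2]
    ring
  rw [this]
end
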